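/- arXiv:1703.08802 — 11 statements merged into one kernel-verified Lean document; each statement's English description precedes it below -/
import Mathlib

section
/- Let σ : G → H be a quasihomomorphism with defect set D(σ) and defect group Δ(σ) (the subgroup generated by D(σ)). Then for all g,h,i ∈ G, conjugation of d(h,i) by σ(g) lies in the finite set D·D·D⁻¹, i.e. σ(g) d(h,i) σ(g)⁻¹ = d(g,h) d(gh,i) d(g,hi)⁻¹. -/
/-- For a quasihomomorphism σ with defect set D, conjugation of d(h,i) by σ(g)
equals d(g,h)·d(gh,i)·d(g,hi)⁻¹, and hence lies in the finite set D·D·D⁻¹. -/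
theorem stmt2 {G H : Type*} [Group G] [Group H] (σ : G → H) (d : G → G → H)
    (D : Set H) (hD : D = {x : H | ∃ g h : G, x = σ g * σ h * (σ (g * h))⁻¹})
    (hd : ∀ g h : G, d g h = σ g * σ h * (σ (g * h))⁻¹)
    (hfin : D.Finite) :
    ∀ g h i : G,
      σ g * d h i * (σ g)⁻¹ = d g h * d (g * h) i * (d g (h * i))⁻¹ ∧
      σ g * d h i * (σ g)⁻¹ ∈ {x : H | ∃ a ∈ D, ∃ b ∈ D, ∃ c ∈ D, x = a * b * c⁻¹} ∧
      Set.Finite {x : H | ∃ a ∈ D, ∃ b ∈ D, ∃ c ∈ D, x = a * b * c⁻¹} := by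
  intro g h i
  have hmem : ∀ a b : G, d a b ∈ D := by
    intro a b; rw [hD]; exact ⟨a, b, hd a b⟩
  have key : σ g * d h i * (σ g)⁻¹ = d g h * d (g * h) i * (d g (h * i))⁻¹ := by
    simp only [hd, mul_assoc]
    group
  refine ⟨key, ?_, ?_⟩
  · exact ⟨d g h, hmem g h, d (g * h) i, hmem (g*h) i, d g (h * i), hmem g (h*i), key⟩
  · have : {x : H | ∃ a ∈ D, ∃ b ∈ D, ∃ c ∈ D, x = a * b * c⁻¹} ⊆
        (fun p : H × H × H => p.1 * p.2.1 * p.2.2⁻¹) '' (D ×ˢ D ×ˢ D) := by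
      rintro x ⟨a, ha, b, hb, c, hc, rfl⟩
      exact ⟨⟨a, b, c⟩, ⟨ha, hb, hc⟩, rfl⟩
    exact Set.Finite.subset (((hfin.prod (hfin.prod hfin)).image _)) this
end

section
/- Let σ : G → H be a quasihomomorphism and let H₀ ≤ H be the subgroup generated by the image σ(G). Then the defect group Δ(σ), generated by D(σ), is a normal subgroup of H₀. -/
/-- For a quasihomomorphism σ : G → H, the defect group Δ(σ) (generated by the
defect set D(σ)) is a normal subgroup of the subgroup H₀ generated by σ(G). -/
theorem stmt3 {G H : Type*} [Group G] [Group H] (σ : G → H)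
    (D : Set H) (hD : D = {x : H | ∃ g h : G, x = σ g * σ h * (σ (g * h))⁻¹})
    (hfin : D.Finite) :
    Subgroup.closure D ≤ Subgroup.closure (Set.range σ) ∧
    ∀ x ∈ Subgroup.closure (Set.range σ), ∀ a ∈ Subgroup.closure D,
      x * a * x⁻¹ ∈ Subgroup.closure D := by
  set K := Subgroup.closure D with hK
  have hmem : ∀ a b : G, σ a * σ b * (σ (a * b))⁻¹ ∈ D := by
    intro a b; rw [hD]; exact ⟨a, b, rfl⟩
  -- conjugation by σ g maps D into K
  have key1 : ∀ g : G, ∀ d ∈ D, σ g * d * (σ g)⁻¹ ∈ K := by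
    intro g d hd
    rw [hD] at hd
    obtain ⟨a, b, rfl⟩ := hd
    have h1 : σ g * σ a * (σ (g * a))⁻¹ ∈ K := Subgroup.subset_closure (hmem g a)
    have h2 : σ (g * a) * σ b * (σ (g * a * b))⁻¹ ∈ K :=
      Subgroup.subset_closure (hmem (g * a) b)
    have h3 : σ g * σ (a * b) * (σ (g * (a * b)))⁻¹ ∈ K :=
      Subgroup.subset_closure (hmem g (a * b))
    rw [show g * (a * b) = g * a * b from (mul_assoc g a b).symm] at h3
    have he : σ g * (σ a * σ b * (σ (a * b))⁻¹) * (σ g)⁻¹ =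
        (σ g * σ a * (σ (g * a))⁻¹) * (σ (g * a) * σ b * (σ (g * a * b))⁻¹) *
        (σ g * σ (a * b) * (σ (g * a * b))⁻¹)⁻¹ := by
      group
    rw [he]
    exact mul_mem (mul_mem h1 h2) (inv_mem h3)
  -- conjugation by σ g maps K into K
  have key2 : ∀ g : G, ∀ a ∈ K, σ g * a * (σ g)⁻¹ ∈ K := by
    intro g
    have : K ≤ K.comap ((MulAut.conj (σ g)).toMonoidHom : H →* H) := by
      rw [hK, Subgroup.closure_le]
      intro d hd
      simpa [Subgroup.mem_comap, MulAut.conj_apply, mul_assoc] using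
        (by simpa [mul_assoc] using key1 g d hd : σ g * d * (σ g)⁻¹ ∈ K)
    intro a ha
    have := this ha
    simpa [Subgroup.mem_comap, MulAut.conj_apply, mul_assoc] using this
  -- σ 1 ∈ K
  have hσ1 : σ 1 ∈ K := by
    have h := Subgroup.subset_closure (hmem 1 1)
    rw [one_mul] at h
    have : σ (1 : G) = σ 1 * σ 1 * (σ 1)⁻¹ := by group
    rw [this]; exact h
  -- inverse conjugation
  have key3 : ∀ g : G, ∀ a ∈ K, (σ g)⁻¹ * a * σ g ∈ K := by
    intro g a ha
    have he : σ g * σ g⁻¹ * (σ (g * g⁻¹))⁻¹ ∈ D := hmem g g⁻¹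
    rw [mul_inv_cancel] at he
    set e := σ g * σ g⁻¹ * (σ 1)⁻¹ with hedef
    have heK : e ∈ K := Subgroup.subset_closure he
    have hb : (σ 1)⁻¹ * e⁻¹ * a * e * σ 1 ∈ K := by
      exact mul_mem (mul_mem (mul_mem (mul_mem (inv_mem hσ1) (inv_mem heK)) ha) heK) hσ1
    have hre : (σ g)⁻¹ * a * σ g =
        σ g⁻¹ * ((σ 1)⁻¹ * e⁻¹ * a * e * σ 1) * (σ g⁻¹)⁻¹ := by
      rw [hedef]; group
    rw [hre]
    exact key2 g⁻¹ _ hb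
  constructor
  · rw [hK, Subgroup.closure_le]
    intro d hd
    rw [hD] at hd
    obtain ⟨a, b, rfl⟩ := hd
    exact mul_mem (mul_mem (Subgroup.subset_closure ⟨a, rfl⟩)
      (Subgroup.subset_closure ⟨b, rfl⟩)) (inv_mem (Subgroup.subset_closure ⟨a * b, rfl⟩))
  · intro x hx
    refine Subgroup.closure_induction
      (p := fun y _ => (∀ a ∈ K, y * a * y⁻¹ ∈ K) ∧ (∀ a ∈ K, y⁻¹ * a * y ∈ K))
      ?_ ?_ ?_ ?_ hx |>.1
    · rintro y ⟨g, rfl⟩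
      exact ⟨key2 g, key3 g⟩
    · constructor <;> intro a ha <;> simpa using ha
    · rintro y z _ _ ⟨hy1, hy2⟩ ⟨hz1, hz2⟩
      constructor
      · intro a ha
        have : y * z * a * (y * z)⁻¹ = y * (z * a * z⁻¹) * y⁻¹ := by group
        rw [this]; exact hy1 _ (hz1 a ha)
      · intro a ha
        have : (y * z)⁻¹ * a * (y * z) = z⁻¹ * (y⁻¹ * a * y) * z := by group
        rw [this]; exact hz2 _ (hy2 a ha)
    · rintro y _ ⟨hy1, hy2⟩
      exact ⟨fun a ha => by simpa using hy2 a ha, fun a ha => by simpa using hy1 a ha⟩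
end

section
/- Let σ : G → H be a quasihomomorphism with defect group Δ = Δ(σ). Define φ : G → Aut(Δ) by φ(g)(a) = σ(g) a σ(g)⁻¹ (well-defined since Δ is normal in the subgroup generated by σ(G)). Then φ has finite image in Aut(Δ). -/
/-- For a quasihomomorphism σ : G → H with defect group Δ, the map
φ : G → Aut(Δ) given by conjugation by σ(g) has finite image. -/
theorem stmt4 {G H : Type*} [Group G] [Group H] (σ : G → H)
    (D : Set H) (hD : D = {x : H | ∃ g h : G, x = σ g * σ h * (σ (g * h))⁻¹})
    (hfin : D.Finite) :
    Set.Finite (Set.range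
      (fun g : G => fun a : (Subgroup.closure D : Subgroup H) => σ g * (a : H) * (σ g)⁻¹)) := by
  set bigF := fun g : G => fun a : (Subgroup.closure D : Subgroup H) => σ g * (a : H) * (σ g)⁻¹
    with hbigF
  set S : Set H := (fun p : H × H × H => p.1 * p.2.1 * p.2.2⁻¹) '' (D ×ˢ D ×ˢ D) with hS
  have hSfin : S.Finite := (hfin.prod (hfin.prod hfin)).image _
  have key : ∀ g : G, ∀ d ∈ D, σ g * d * (σ g)⁻¹ ∈ S := by
    intro g d hd
    rw [hD] at hd
    obtain ⟨a, b, rfl⟩ := hd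
    refine ⟨⟨σ g * σ a * (σ (g*a))⁻¹, σ (g*a) * σ b * (σ ((g*a)*b))⁻¹,
        σ g * σ (a*b) * (σ (g*(a*b)))⁻¹⟩, ⟨?_, ?_, ?_⟩, ?_⟩
    · rw [hD]; exact ⟨g, a, rfl⟩
    · rw [hD]; exact ⟨g*a, b, rfl⟩
    · rw [hD]; exact ⟨g, a*b, rfl⟩
    · simp only [mul_assoc]
      group
  have hDfin : Finite ↥D := hfin.to_subtype
  have hSfin' : Finite ↥S := hSfin.to_subtype
  set F' : G → (↥D → ↥S) := fun g d => ⟨σ g * (d : H) * (σ g)⁻¹, key g d d.2⟩ with hF'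
  rw [← Set.finite_coe_iff]
  refine Finite.of_injective (fun f : ↥(Set.range bigF) => F' f.2.choose) ?_
  rintro ⟨f₁, hf₁⟩ ⟨f₂, hf₂⟩ h
  set g₁ := hf₁.choose with hg₁
  set g₂ := hf₂.choose with hg₂
  have e₁ : bigF g₁ = f₁ := hf₁.choose_spec
  have e₂ : bigF g₂ = f₂ := hf₂.choose_spec
  have hgen : ∀ d ∈ D, σ g₁ * d * (σ g₁)⁻¹ = σ g₂ * d * (σ g₂)⁻¹ := by
    intro d hd
    have := congrFun h ⟨d, hd⟩
    simpa [hF', Subtype.ext_iff] using this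
  have hall : ∀ a ∈ Subgroup.closure D, σ g₁ * a * (σ g₁)⁻¹ = σ g₂ * a * (σ g₂)⁻¹ := by
    intro a ha
    induction ha using Subgroup.closure_induction with
    | mem x hx => exact hgen x hx
    | one => simp
    | mul x y hx hy ihx ihy =>
        have : (σ g₁ * x * (σ g₁)⁻¹) * (σ g₁ * y * (σ g₁)⁻¹)
            = (σ g₂ * x * (σ g₂)⁻¹) * (σ g₂ * y * (σ g₂)⁻¹) := by rw [ihx, ihy]
        calc σ g₁ * (x * y) * (σ g₁)⁻¹
            = (σ g₁ * x * (σ g₁)⁻¹) * (σ g₁ * y * (σ g₁)⁻¹) := by group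
          _ = (σ g₂ * x * (σ g₂)⁻¹) * (σ g₂ * y * (σ g₂)⁻¹) := this
          _ = σ g₂ * (x * y) * (σ g₂)⁻¹ := by group
    | inv x hx ihx =>
        calc σ g₁ * x⁻¹ * (σ g₁)⁻¹ = (σ g₁ * x * (σ g₁)⁻¹)⁻¹ := by group
          _ = (σ g₂ * x * (σ g₂)⁻¹)⁻¹ := by rw [ihx]
          _ = σ g₂ * x⁻¹ * (σ g₂)⁻¹ := by group
  apply Subtype.ext
  show f₁ = f₂
  rw [← e₁, ← e₂]
  funext a
  exact hall a a.2
end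

section
/- Let σ : G → H be a quasihomomorphism with defect group Δ, and let φ : G → Aut(Δ) be given by conjugation by σ(g). Then the composition ψ : G → Out(Δ) of φ with the quotient map Aut(Δ) → Out(Δ) is a group homomorphism. -/
/-- For a quasihomomorphism σ : G → H with defect group Δ, the map
ψ : G → Out(Δ) induced by conjugation by σ(g) is a homomorphism: for all g,h the
automorphisms φ(g)∘φ(h) and φ(gh) of Δ differ by an inner automorphism of Δ. -/
theorem stmt5 {G H : Type*} [Group G] [Group H] (σ : G → H)
    (D : Set H) (hD : D = {x : H | ∃ g h : G, x = σ g * σ h * (σ (g * h))⁻¹})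
    (hfin : D.Finite) :
    ∀ g h : G, ∃ b ∈ Subgroup.closure D, ∀ a ∈ Subgroup.closure D,
      σ g * (σ h * a * (σ h)⁻¹) * (σ g)⁻¹
        = b * (σ (g * h) * a * (σ (g * h))⁻¹) * b⁻¹ := by
  intro g h
  refine ⟨σ g * σ h * (σ (g * h))⁻¹, Subgroup.subset_closure ?_, ?_⟩
  · rw [hD]; exact ⟨g, h, rfl⟩
  · intro a _; group
end

section
/- Let σ : G → H be a quasihomomorphism with defect group Δ. If A ⊆ Δ is a finite subset, then the set {σ(g) a σ(g)⁻¹ | g ∈ G, a ∈ A} is a finite subset of Δ. -/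
open scoped Pointwise

/-- For a quasihomomorphism σ with defect group Δ and a finite subset A ⊆ Δ,
the set {σ(g)·a·σ(g)⁻¹ | g ∈ G, a ∈ A} is a finite subset of Δ. -/
theorem stmt7 {G H : Type*} [Group G] [Group H] (σ : G → H)
    (D : Set H) (hD : D = {x : H | ∃ g h : G, x = σ g * σ h * (σ (g * h))⁻¹})
    (hfin : D.Finite)
    (A : Set H) (hA : A ⊆ (Subgroup.closure D : Subgroup H)) (hAfin : A.Finite) :
    Set.Finite {x : H | ∃ g : G, ∃ a ∈ A, x = σ g * a * (σ g)⁻¹} ∧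
    {x : H | ∃ g : G, ∃ a ∈ A, x = σ g * a * (σ g)⁻¹}
      ⊆ (Subgroup.closure D : Subgroup H) := by
  -- The finite set E = D * D * D⁻¹
  set E : Set H := {x : H | ∃ d₁ ∈ D, ∃ d₂ ∈ D, ∃ d₃ ∈ D, x = d₁ * d₂ * d₃⁻¹} with hE
  have hEfin : E.Finite := by
    have hsub : E ⊆ (fun p : H × H × H => p.1 * p.2.1 * p.2.2⁻¹) '' (D ×ˢ D ×ˢ D) := by
      rintro x ⟨d₁, h1, d₂, h2, d₃, h3, rfl⟩
      exact ⟨⟨d₁, d₂, d₃⟩, ⟨h1, h2, h3⟩, rfl⟩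
    exact (((hfin.prod (hfin.prod hfin)).image _)).subset hsub
  have hEΔ : E ⊆ (Subgroup.closure D : Subgroup H) := by
    rintro x ⟨d₁, h1, d₂, h2, d₃, h3, rfl⟩
    exact mul_mem (mul_mem (Subgroup.subset_closure h1) (Subgroup.subset_closure h2))
      (inv_mem (Subgroup.subset_closure h3))
  -- Key: for each a ∈ Δ, the set of conjugates of a is finite and ⊆ Δ
  have key : ∀ a ∈ Subgroup.closure D, Set.Finite {x : H | ∃ g : G, x = σ g * a * (σ g)⁻¹} ∧
      {x : H | ∃ g : G, x = σ g * a * (σ g)⁻¹} ⊆ (Subgroup.closure D : Subgroup H) := by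
    intro a ha
    induction ha using Subgroup.closure_induction with
    | mem d hd =>
      have hsub : {x : H | ∃ g : G, x = σ g * d * (σ g)⁻¹} ⊆ E := by
        rintro x ⟨g, rfl⟩
        obtain ⟨u, v, rfl⟩ : ∃ u v : G, d = σ u * σ v * (σ (u * v))⁻¹ := by
          rw [hD] at hd; exact hd
        refine ⟨σ g * σ u * (σ (g * u))⁻¹, by rw [hD]; exact ⟨g, u, rfl⟩,
          σ (g * u) * σ v * (σ (g * u * v))⁻¹, by rw [hD]; exact ⟨g * u, v, rfl⟩,
          σ g * σ (u * v) * (σ (g * (u * v)))⁻¹, by rw [hD]; exact ⟨g, u * v, rfl⟩, ?_⟩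
        have : g * u * v = g * (u * v) := mul_assoc g u v
        rw [this]
        group
      exact ⟨hEfin.subset hsub, fun x hx => hEΔ (hsub hx)⟩
    | one =>
      have hsub : {x : H | ∃ g : G, x = σ g * 1 * (σ g)⁻¹} ⊆ {(1 : H)} := by
        rintro x ⟨g, rfl⟩; simp
      exact ⟨(Set.finite_singleton _).subset hsub,
        fun x hx => by rcases hx with ⟨g, rfl⟩; simp⟩
    | mul x y hx hy ihx ihy =>
      have hsub : {z : H | ∃ g : G, z = σ g * (x * y) * (σ g)⁻¹} ⊆
          {z : H | ∃ g : G, z = σ g * x * (σ g)⁻¹} * {z : H | ∃ g : G, z = σ g * y * (σ g)⁻¹} := by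
        rintro z ⟨g, rfl⟩
        exact ⟨σ g * x * (σ g)⁻¹, ⟨g, rfl⟩, σ g * y * (σ g)⁻¹, ⟨g, rfl⟩, by group⟩
      refine ⟨(ihx.1.mul ihy.1).subset hsub, fun z hz => ?_⟩
      obtain ⟨p, hp, q, hq, rfl⟩ := hsub hz
      exact mul_mem (ihx.2 hp) (ihy.2 hq)
    | inv x hx ih =>
      have hsub : {z : H | ∃ g : G, z = σ g * x⁻¹ * (σ g)⁻¹} ⊆
          {z : H | ∃ g : G, z = σ g * x * (σ g)⁻¹}⁻¹ := by
        rintro z ⟨g, rfl⟩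
        refine ⟨g, ?_⟩
        group
      refine ⟨ih.1.inv.subset hsub, fun z hz => ?_⟩
      obtain ⟨g, hg⟩ := hsub hz
      have : z⁻¹ ∈ (Subgroup.closure D : Subgroup H) := hg ▸ ih.2 ⟨g, rfl⟩
      simpa using inv_mem this
  -- Main set is the union over a ∈ A
  have hmain : {x : H | ∃ g : G, ∃ a ∈ A, x = σ g * a * (σ g)⁻¹} ⊆
      ⋃ a ∈ A, {x : H | ∃ g : G, x = σ g * a * (σ g)⁻¹} := by
    rintro x ⟨g, a, haA, rfl⟩
    exact Set.mem_biUnion haA ⟨g, rfl⟩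
  constructor
  · exact (hAfin.biUnion (fun a haA => (key a (hA haA)).1)).subset hmain
  · intro x hx
    obtain ⟨_, ⟨a, rfl⟩, _, ⟨haA, rfl⟩, hx'⟩ := hmain hx
    exact (key a (hA haA)).2 hx'
end

section
/- Let (e, φ) be a non-abelian cocycle with respect to (G, N, ψ), and let e' : G×G → N satisfy e'(1,g)=e'(g,1)=1. Then (e', φ) is a non-abelian cocycle with respect to (G,N,ψ) if and only if there exists c : G×G → Z(N) with c(1,g)=c(g,1)=1, e'(g,h) = c(g,h)·e(g,h) for all g,h, and δ²c = 0 (i.e. φ(g)(c(h,i)) − c(gh,i) + c(g,hi) − c(g,h) = 0, written additively in the G-module Z(N)). -/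
private lemma aut_center {N : Type*} [Group N] (f : MulAut N) {x : N}
    (hx : x ∈ Subgroup.center N) : f x ∈ Subgroup.center N := by
  rw [Subgroup.mem_center_iff] at hx ⊢
  intro m
  have := hx (f⁻¹ m)
  calc m * f x = f (f⁻¹ m * x) := by simp [map_mul]
    _ = f (x * f⁻¹ m) := by rw [this]
    _ = f x * m := by simp [map_mul]

/-- Given a non-abelian cocycle (e,φ) with respect to (G,N,ψ), a normalized map
e' : G×G → N yields a non-abelian cocycle (e',φ) iff e' = c·e for a normalized
central-valued 2-cochain c with δ²c = 0 (written multiplicatively: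
φ(g)(c(h,i))·c(g,hi) = c(g,h)·c(gh,i)). -/
theorem stmt11 {G N : Type*} [Group G] [Group N]
    (φ : G → MulAut N) (e e' : G → G → N)
    (hψ : ∀ g h : G, ∃ m : N, ∀ n : N, φ (g * h) n = m * φ g (φ h n) * m⁻¹)
    (hφ1 : φ 1 = 1) (he1 : ∀ g : G, e 1 g = 1 ∧ e g 1 = 1)
    (hconj : ∀ g h : G, ∀ n : N, e g h * n * (e g h)⁻¹ = φ g (φ h ((φ (g * h))⁻¹ n)))
    (hcoc : ∀ g h i : G, φ g (e h i) * e g (h * i) = e g h * e (g * h) i)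
    (he'1 : ∀ g : G, e' 1 g = 1 ∧ e' g 1 = 1) :
    ((∀ g h : G, ∀ n : N, e' g h * n * (e' g h)⁻¹ = φ g (φ h ((φ (g * h))⁻¹ n))) ∧
     (∀ g h i : G, φ g (e' h i) * e' g (h * i) = e' g h * e' (g * h) i)) ↔
    (∃ c : G → G → N,
      (∀ g h : G, c g h ∈ Subgroup.center N) ∧
      (∀ g : G, c 1 g = 1 ∧ c g 1 = 1) ∧
      (∀ g h : G, e' g h = c g h * e g h) ∧
      (∀ g h i : G, φ g (c h i) * c g (h * i) = c g h * c (g * h) i)) := by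
  constructor
  · rintro ⟨hconj', hcoc'⟩
    set c : G → G → N := fun g h => e' g h * (e g h)⁻¹ with hc
    have hce : ∀ g h : G, c g h * e g h = e' g h := by
      intro g h; simp [hc]
    have hcent : ∀ g h : G, c g h ∈ Subgroup.center N := by
      intro g h
      rw [Subgroup.mem_center_iff]
      intro m
      have key : e' g h * ((e g h)⁻¹ * m * e g h) * (e' g h)⁻¹ = m := by
        have hx := (hconj' g h ((e g h)⁻¹ * m * e g h)).trans
          (hconj g h ((e g h)⁻¹ * m * e g h)).symm
        rw [hx]; group
      calc m * c g h
          = (e' g h * ((e g h)⁻¹ * m * e g h) * (e' g h)⁻¹) * c g h := by rw [key]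
        _ = c g h * m := by simp [hc]; group
    refine ⟨c, hcent, ?_, ?_, ?_⟩
    · intro g
      simp [hc, (he1 g).1, (he1 g).2, (he'1 g).1, (he'1 g).2]
    · intro g h; rw [hce]
    · intro g h i
      have comm1 : ∀ m : N, m * c g (h * i) = c g (h * i) * m :=
        Subgroup.mem_center_iff.mp (hcent g (h * i))
      have comm2 : ∀ m : N, m * c (g * h) i = c (g * h) i * m :=
        Subgroup.mem_center_iff.mp (hcent (g * h) i)
      have key : φ g (c h i) * c g (h * i) * (e g h * e (g * h) i)
          = c g h * c (g * h) i * (e g h * e (g * h) i) := by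
        calc φ g (c h i) * c g (h * i) * (e g h * e (g * h) i)
            = φ g (c h i) * c g (h * i) * (φ g (e h i) * e g (h * i)) := by rw [hcoc]
          _ = φ g (c h i) * (c g (h * i) * φ g (e h i)) * e g (h * i) := by group
          _ = φ g (c h i) * (φ g (e h i) * c g (h * i)) * e g (h * i) := by
              rw [← comm1 (φ g (e h i))]
          _ = φ g (c h i * e h i) * (c g (h * i) * e g (h * i)) := by
              conv_rhs => rw [map_mul]
              simp only [mul_assoc]
          _ = φ g (e' h i) * e' g (h * i) := by rw [hce, hce]
          _ = e' g h * e' (g * h) i := hcoc' g h i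
          _ = c g h * e g h * (c (g * h) i * e (g * h) i) := by rw [hce, hce]
          _ = c g h * (e g h * c (g * h) i) * e (g * h) i := by group
          _ = c g h * (c (g * h) i * e g h) * e (g * h) i := by rw [comm2 (e g h)]
          _ = c g h * c (g * h) i * (e g h * e (g * h) i) := by group
      exact mul_right_cancel key
  · rintro ⟨c, hcent, hc1, hce, hccoc⟩
    constructor
    · intro g h n
      have comm : ∀ m : N, m * c g h = c g h * m :=
        Subgroup.mem_center_iff.mp (hcent g h)
      calc e' g h * n * (e' g h)⁻¹
          = c g h * e g h * n * (c g h * e g h)⁻¹ := by rw [hce]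
        _ = c g h * (e g h * n * (e g h)⁻¹) * (c g h)⁻¹ := by group
        _ = (e g h * n * (e g h)⁻¹) * c g h * (c g h)⁻¹ := by
            rw [← comm (e g h * n * (e g h)⁻¹)]
        _ = e g h * n * (e g h)⁻¹ := by group
        _ = φ g (φ h ((φ (g * h))⁻¹ n)) := hconj g h n
    · intro g h i
      have comm1 : ∀ m : N, m * c g (h * i) = c g (h * i) * m :=
        Subgroup.mem_center_iff.mp (hcent g (h * i))
      have comm2 : ∀ m : N, m * c (g * h) i = c (g * h) i * m :=
        Subgroup.mem_center_iff.mp (hcent (g * h) i)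
      calc φ g (e' h i) * e' g (h * i)
          = φ g (c h i * e h i) * (c g (h * i) * e g (h * i)) := by rw [hce, hce]
        _ = φ g (c h i) * (φ g (e h i) * c g (h * i)) * e g (h * i) := by
            rw [map_mul]; simp only [mul_assoc]
        _ = φ g (c h i) * (c g (h * i) * φ g (e h i)) * e g (h * i) := by
            rw [comm1 (φ g (e h i))]
        _ = (φ g (c h i) * c g (h * i)) * (φ g (e h i) * e g (h * i)) := by group
        _ = (c g h * c (g * h) i) * (e g h * e (g * h) i) := by
            rw [hccoc, hcoc]
        _ = c g h * (c (g * h) i * e g h) * e (g * h) i := by group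
        _ = c g h * (e g h * c (g * h) i) * e (g * h) i := by
            rw [comm2 (e g h)]
        _ = c g h * e g h * (c (g * h) i * e (g * h) i) := by group
        _ = e' g h * e' (g * h) i := by rw [← hce, ← hce]
end

section
/- Let (e, φ) and (e', φ) be non-abelian cocycles with respect to (G,N,ψ), and suppose there is z : G → Z(N) with z(1)=1 and e(g,h) = (δ¹z)(g,h)·e'(g,h) for all g,h, where (δ¹z)(g,h) = φ(g)(z(h))·z(gh)⁻¹·z(g) (all factors central). Then the map Φ : E(e,φ) → E(e',φ), (n,g) ↦ (n·z(g), g), is an isomorphism of groups commuting with the inclusions of N and projections to G (i.e. the two extensions are equivalent). -/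
/-- If two non-abelian cocycles (e,φ) and (e',φ) differ by the coboundary of a
normalized central-valued 1-cochain z (i.e. e(g,h) = φ(g)(z(h))·z(gh)⁻¹·z(g)·e'(g,h)),
then Φ : (n,g) ↦ (n·z(g), g) is an isomorphism E(e,φ) → E(e',φ) commuting with
the inclusions of N and the projections to G, so the extensions are equivalent. -/
theorem stmt12 {G N : Type*} [Group G] [Group N]
    (φ : G → MulAut N) (e e' : G → G → N)
    (hψ : ∀ g h : G, ∃ m : N, ∀ n : N, φ (g * h) n = m * φ g (φ h n) * m⁻¹)
    (hφ1 : φ 1 = 1)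
    (he1 : ∀ g : G, e 1 g = 1 ∧ e g 1 = 1)
    (he'1 : ∀ g : G, e' 1 g = 1 ∧ e' g 1 = 1)
    (hconj : ∀ g h : G, ∀ n : N, e g h * n * (e g h)⁻¹ = φ g (φ h ((φ (g * h))⁻¹ n)))
    (hconj' : ∀ g h : G, ∀ n : N, e' g h * n * (e' g h)⁻¹ = φ g (φ h ((φ (g * h))⁻¹ n)))
    (hcoc : ∀ g h i : G, φ g (e h i) * e g (h * i) = e g h * e (g * h) i)
    (hcoc' : ∀ g h i : G, φ g (e' h i) * e' g (h * i) = e' g h * e' (g * h) i)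
    (z : G → N) (hz1 : z 1 = 1) (hzc : ∀ g : G, z g ∈ Subgroup.center N)
    (hze : ∀ g h : G, e g h = φ g (z h) * (z (g * h))⁻¹ * z g * e' g h)
    (m m' : N × G → N × G → N × G)
    (hm : ∀ p q : N × G, m p q = (p.1 * φ p.2 q.1 * e p.2 q.2, p.2 * q.2))
    (hm' : ∀ p q : N × G, m' p q = (p.1 * φ p.2 q.1 * e' p.2 q.2, p.2 * q.2)) :
    Function.Bijective (fun p : N × G => ((p.1 * z p.2, p.2) : N × G)) ∧
    (∀ p q : N × G,
      (fun p : N × G => ((p.1 * z p.2, p.2) : N × G)) (m p q)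
        = m' ((p.1 * z p.2, p.2)) ((q.1 * z q.2, q.2))) ∧
    (∀ n : N, ((fun p : N × G => ((p.1 * z p.2, p.2) : N × G)) (n, 1)) = (n, 1)) ∧
    (∀ p : N × G, ((fun p : N × G => ((p.1 * z p.2, p.2) : N × G)) p).2 = p.2) := by
  have hc : ∀ g : G, ∀ n : N, n * z g = z g * n := fun g n =>
    ((Subgroup.mem_center_iff.mp (hzc g)) n)
  refine ⟨⟨fun p q hpq => ?_, fun p => ⟨(p.1 * (z p.2)⁻¹, p.2), by simp⟩⟩, ?_, ?_, ?_⟩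
  · simp only [Prod.mk.injEq] at hpq
    obtain ⟨h1, h2⟩ := hpq
    rw [h2] at h1
    exact Prod.ext (mul_right_cancel h1) h2
  · intro p q
    simp only [hm, hm', Prod.mk.injEq, and_true]
    rw [hze, map_mul]
    have c1 := hc p.2
    have c2 := hc (p.2 * q.2)
    set A := p.1
    set B := (φ p.2) q.1
    set C := (φ p.2) (z q.2)
    set Zp := z p.2
    set Zg := z (p.2 * q.2)
    set E := e' p.2 q.2
    calc A * B * (C * Zg⁻¹ * Zp * E) * Zg
        = A * B * C * Zg⁻¹ * (Zp * E * Zg) := by group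
      _ = A * B * C * Zg⁻¹ * (Zg * (Zp * E)) := by rw [c2 (Zp * E)]
      _ = A * B * (C * Zp) * E := by group
      _ = A * B * (Zp * C) * E := by rw [c1 C]
      _ = A * (B * Zp) * (C * E) := by group
      _ = A * (Zp * B) * (C * E) := by rw [c1 B]
      _ = A * Zp * (B * C) * E := by group
  · intro n; simp [hz1]
  · intro p; rfl
end

section
/- Let G, N, ψ, φ, ζ be as follows: ψ : G → Out(N) a homomorphism with finite image, φ a lift of ψ with finite image and φ(1)=1, and ζ : G×G → N with finite image, ζ(1,g)=ζ(g,1)=1, realizing φ(g)φ(h)φ(gh)⁻¹ by conjugation. Define o(g,h,i) ∈ N by φ(g)(ζ(h,i))·ζ(g,hi) = o(g,h,i)·ζ(g,h)·ζ(gh,i). Then o(g,h,i) lies in the centre Z(N) for all g,h,i ∈ G, o has finite image, o(g,h,i)=1 whenever one of g,h,i is 1, and o is a 3-cocycle: φ(g)(o(h,i,k)) − o(gh,i,k) + o(g,hi,k) − o(g,h,ik) + o(g,h,i) = 0 for all g,h,i,k ∈ G. -/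
/-- With φ a finite-image lift of a finite-image ψ and ζ realising
φ(g)φ(h)φ(gh)⁻¹ by conjugation, the map o defined by
φ(g)(ζ(h,i))·ζ(g,hi) = o(g,h,i)·ζ(g,h)·ζ(gh,i) takes values in the centre Z(N),
has finite image, vanishes when one argument is 1, and is a 3-cocycle:
φ(g)(o(h,i,k))·o(g,hi,k)·o(g,h,i) = o(gh,i,k)·o(g,h,ik). -/
theorem stmt14 {G N : Type*} [Group G] [Group N]
    (φ : G → MulAut N)
    (hφfin : Set.Finite (Set.range φ)) (hφ1 : φ 1 = 1)
    (ζ : G → G → N)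
    (hζfin : Set.Finite (Set.range (fun p : G × G => ζ p.1 p.2)))
    (hζ1 : ∀ g : G, ζ 1 g = 1 ∧ ζ g 1 = 1)
    (hζ : ∀ g h : G, ∀ m : N, ζ g h * m * (ζ g h)⁻¹ = φ g (φ h ((φ (g * h))⁻¹ m)))
    (o : G → G → G → N)
    (ho : ∀ g h i : G, φ g (ζ h i) * ζ g (h * i) = o g h i * ζ g h * ζ (g * h) i) :
    (∀ g h i : G, o g h i ∈ Subgroup.center N) ∧
    Set.Finite (Set.range (fun p : G × G × G => o p.1 p.2.1 p.2.2)) ∧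
    (∀ g h i : G, g = 1 ∨ h = 1 ∨ i = 1 → o g h i = 1) ∧
    (∀ g h i k : G,
      φ g (o h i k) * o g (h * i) k * o g h i = o (g * h) i k * o g h (i * k)) := by
  have hz1 : ∀ g : G, ζ 1 g = 1 := fun g => (hζ1 g).1
  have hz2 : ∀ g : G, ζ g 1 = 1 := fun g => (hζ1 g).2
  have ho' : ∀ g h i : G,
      o g h i = φ g (ζ h i) * ζ g (h*i) * (ζ (g*h) i)⁻¹ * (ζ g h)⁻¹ := by
    intro g h i
    have h2 : o g h i * ζ g h * ζ (g*h) i * (ζ (g*h) i)⁻¹ * (ζ g h)⁻¹ = o g h i := by group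
    rw [← h2, ← ho g h i]
  have keyζ : ∀ a b : G, MulAut.conj (ζ a b) = φ a * φ b * (φ (a*b))⁻¹ := by
    intro a b
    ext m
    simpa using hζ a b m
  have keyφ : ∀ (a : G) (x : N), MulAut.conj (φ a x) = φ a * MulAut.conj x * (φ a)⁻¹ := by
    intro a x
    ext m
    simp [MulAut.conj_apply, map_mul, map_inv, mul_assoc]
  have hcen : ∀ g h i : G, o g h i ∈ Subgroup.center N := by
    intro g h i
    rw [Subgroup.mem_center_iff]
    intro n
    have hconj : MulAut.conj (o g h i) = 1 := by
      rw [ho' g h i]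
      simp only [map_mul, map_inv, keyζ, keyφ]
      rw [show g*(h*i) = g*h*i from (mul_assoc g h i).symm]
      group
    have h3 : o g h i * n * (o g h i)⁻¹ = n := by
      have := DFunLike.congr_fun hconj n
      simpa using this
    exact (mul_inv_eq_iff_eq_mul.mp h3).symm
  have hfin : Set.Finite (Set.range (fun p : G × G × G => o p.1 p.2.1 p.2.2)) := by
    apply Set.Finite.subset
      (Set.Finite.image
        (fun q : MulAut N × N × N × N × N => q.1 q.2.1 * q.2.2.1 * q.2.2.2.1⁻¹ * q.2.2.2.2⁻¹)
        (hφfin.prod (hζfin.prod (hζfin.prod (hζfin.prod hζfin)))))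
    rintro x ⟨⟨g, h, i⟩, rfl⟩
    exact ⟨(φ g, ζ h i, ζ g (h*i), ζ (g*h) i, ζ g h),
      ⟨⟨g, rfl⟩, ⟨(h, i), rfl⟩, ⟨(g, h*i), rfl⟩, ⟨(g*h, i), rfl⟩, ⟨(g, h), rfl⟩⟩,
      (ho' g h i).symm⟩
  have hvan : ∀ g h i : G, g = 1 ∨ h = 1 ∨ i = 1 → o g h i = 1 := by
    rintro g h i (rfl | rfl | rfl) <;> simp [ho', hφ1, hz1, hz2]
  refine ⟨hcen, hfin, hvan, ?_⟩
  intro g h i k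
  have hc : ∀ (a b c : G) (n : N), n * o a b c = o a b c * n :=
    fun a b c n => Subgroup.mem_center_iff.mp (hcen a b c) n
  have e6 : φ g (φ h (ζ i k)) * ζ g h = ζ g h * φ (g*h) (ζ i k) := by
    have h1 := hζ g h (φ (g*h) (ζ i k))
    rw [MulAut.inv_apply_self] at h1
    rw [← h1]; group
  have wayA : φ g (φ h (ζ i k)) * φ g (ζ h (i*k)) * ζ g (h*(i*k))
      = φ g (o h i k) * o g (h*i) k * o g h i * (ζ g h * ζ (g*h) i * ζ (g*h*i) k) := by
    calc φ g (φ h (ζ i k)) * φ g (ζ h (i*k)) * ζ g (h*(i*k))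
        = φ g (φ h (ζ i k) * ζ h (i*k)) * ζ g (h*(i*k)) := by rw [← map_mul]
      _ = φ g (o h i k * ζ h i * ζ (h*i) k) * ζ g (h*(i*k)) := by rw [ho h i k]
      _ = φ g (o h i k) * φ g (ζ h i) * φ g (ζ (h*i) k) * ζ g (h*i*k) := by
            rw [map_mul, map_mul, ← mul_assoc h i k]
      _ = φ g (o h i k) * φ g (ζ h i) * (φ g (ζ (h*i) k) * ζ g (h*i*k)) := by group
      _ = φ g (o h i k) * φ g (ζ h i) * (o g (h*i) k * ζ g (h*i) * ζ (g*(h*i)) k) := by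
            rw [ho g (h*i) k]
      _ = φ g (o h i k) * (φ g (ζ h i) * o g (h*i) k) * (ζ g (h*i) * ζ (g*(h*i)) k) := by
            group
      _ = φ g (o h i k) * (o g (h*i) k * φ g (ζ h i)) * (ζ g (h*i) * ζ (g*(h*i)) k) := by
            rw [hc g (h*i) k (φ g (ζ h i))]
      _ = φ g (o h i k) * o g (h*i) k * (φ g (ζ h i) * ζ g (h*i)) * ζ (g*(h*i)) k := by
            group
      _ = φ g (o h i k) * o g (h*i) k * (o g h i * ζ g h * ζ (g*h) i) * ζ (g*(h*i)) k := by
            rw [ho g h i]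
      _ = φ g (o h i k) * o g (h*i) k * o g h i * (ζ g h * ζ (g*h) i * ζ (g*h*i) k) := by
            rw [show g*(h*i) = g*h*i from (mul_assoc g h i).symm]; group
  have wayB : φ g (φ h (ζ i k)) * φ g (ζ h (i*k)) * ζ g (h*(i*k))
      = o (g*h) i k * o g h (i*k) * (ζ g h * ζ (g*h) i * ζ (g*h*i) k) := by
    calc φ g (φ h (ζ i k)) * φ g (ζ h (i*k)) * ζ g (h*(i*k))
        = φ g (φ h (ζ i k)) * (φ g (ζ h (i*k)) * ζ g (h*(i*k))) := by group
      _ = φ g (φ h (ζ i k)) * (o g h (i*k) * ζ g h * ζ (g*h) (i*k)) := by rw [ho g h (i*k)]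
      _ = φ g (φ h (ζ i k)) * o g h (i*k) * (ζ g h * ζ (g*h) (i*k)) := by group
      _ = o g h (i*k) * φ g (φ h (ζ i k)) * (ζ g h * ζ (g*h) (i*k)) := by
            rw [hc g h (i*k) (φ g (φ h (ζ i k)))]
      _ = o g h (i*k) * (φ g (φ h (ζ i k)) * ζ g h) * ζ (g*h) (i*k) := by group
      _ = o g h (i*k) * (ζ g h * φ (g*h) (ζ i k)) * ζ (g*h) (i*k) := by rw [e6]
      _ = o g h (i*k) * ζ g h * (φ (g*h) (ζ i k) * ζ (g*h) (i*k)) := by group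
      _ = o g h (i*k) * ζ g h * (o (g*h) i k * ζ (g*h) i * ζ (g*h*i) k) := by
            rw [ho (g*h) i k]
      _ = o g h (i*k) * (ζ g h * o (g*h) i k) * (ζ (g*h) i * ζ (g*h*i) k) := by group
      _ = o g h (i*k) * (o (g*h) i k * ζ g h) * (ζ (g*h) i * ζ (g*h*i) k) := by
            rw [hc (g*h) i k (ζ g h)]
      _ = o g h (i*k) * o (g*h) i k * (ζ g h * ζ (g*h) i * ζ (g*h*i) k) := by group
      _ = o (g*h) i k * o g h (i*k) * (ζ g h * ζ (g*h) i * ζ (g*h*i) k) := by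
            rw [hc (g*h) i k (o g h (i*k))]
  exact mul_right_cancel (wayA.symm.trans wayB)
end

section
/- Let 1 → N → E →π G → 1 be a group extension admitting a section σ : G → E that is a quasihomomorphism (finite defect) with σ(1)=1 and such that the induced map φ_σ : G → Aut(N) has finite image. Let φ : G → Aut(N) be any lift of the induced homomorphism ψ : G → Out(N) with φ(1)=1 and finite image. Then there exists a section σ' : G → E with σ'(1)=1 which is a quasihomomorphism and satisfies φ_{σ'} = φ. -/
/-- If a group extension 1 → N → E → G → 1 is bounded (admits a quasihomomorphic
section σ with σ(1)=1 whose induced map to Aut(N) has finite image), then for any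
set-theoretic lift φ : G → Aut(N) of the induced ψ : G → Out(N) with φ(1)=1 and
finite image, there is a quasihomomorphic section σ' with σ'(1)=1 inducing
exactly φ by conjugation. -/
theorem stmt15 {N E G : Type*} [Group N] [Group E] [Group G]
    (ι : N →* E) (π : E →* G)
    (hι : Function.Injective ι) (hπ : Function.Surjective π)
    (hexact : ∀ x : E, π x = 1 ↔ x ∈ ι.range)
    (σ : G → E) (hσ : ∀ g, π (σ g) = g) (hσ1 : σ 1 = 1)
    (hσqhm : Set.Finite {x : E | ∃ g h : G, x = σ g * σ h * (σ (g * h))⁻¹})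
    (hσfin : Set.Finite (Set.range (fun g : G => fun n : N => σ g * ι n * (σ g)⁻¹)))
    (φ : G → MulAut N) (hφ1 : φ 1 = 1)
    (hφfin : Set.Finite (Set.range φ))
    -- φ lifts the homomorphism ψ : G → Out(N) induced by the extension:
    (hlift : ∀ g : G, ∃ m : N, ∀ n : N,
      σ g * ι n * (σ g)⁻¹ = ι (m * φ g n * m⁻¹)) :
    ∃ σ' : G → E,
      (∀ g, π (σ' g) = g) ∧ σ' 1 = 1 ∧
      Set.Finite {x : E | ∃ g h : G, x = σ' g * σ' h * (σ' (g * h))⁻¹} ∧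
      (∀ (g : G) (n : N), σ' g * ι n * (σ' g)⁻¹ = ι (φ g n)) := by
  classical
  -- the "key" invariant: conjugation by σ g together with φ g
  set key : G → (N → E) × MulAut N :=
    fun g => (fun n : N => σ g * ι n * (σ g)⁻¹, φ g) with hkey
  have hkeyfin : (Set.range key).Finite := by
    have : Set.range key ⊆
        (Set.range (fun g : G => fun n : N => σ g * ι n * (σ g)⁻¹)) ×ˢ Set.range φ := by
      rintro p ⟨g, rfl⟩
      exact ⟨⟨g, rfl⟩, ⟨g, rfl⟩⟩
    exact (hσfin.prod hφfin).subset this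
  -- choose a representative g for each value of key
  set f : (N → E) × MulAut N → G :=
    fun p => if h : ∃ g, key g = p then Classical.choose h else 1 with hf
  have hfkey : ∀ g : G, key (f (key g)) = key g := by
    intro g
    have h : ∃ g', key g' = key g := ⟨g, rfl⟩
    simp only [hf, dif_pos h]
    exact Classical.choose_spec h
  -- choose m₀ g from hlift
  set m₀ : G → N := fun g => Classical.choose (hlift g) with hm₀
  have hm₀spec : ∀ g n, σ g * ι n * (σ g)⁻¹ = ι (m₀ g * φ g n * (m₀ g)⁻¹) :=
    fun g => Classical.choose_spec (hlift g)
  -- the final choice of m, forcing m 1 = 1 and finite range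
  set m : G → N := fun g => if g = 1 then 1 else m₀ (f (key g)) with hm
  have hm1 : m 1 = 1 := by simp [hm]
  have hmfin : (Set.range m).Finite := by
    have : Set.range m ⊆ insert 1 ((m₀ ∘ f) '' Set.range key) := by
      rintro x ⟨g, rfl⟩
      by_cases hg : g = 1
      · simp [hm, hg]
      · simp only [hm, if_neg hg]
        exact Set.mem_insert_of_mem _ ⟨key g, ⟨g, rfl⟩, rfl⟩
    exact ((hkeyfin.image _).insert 1).subset this
  -- key property of m
  have hmspec : ∀ g n, σ g * ι n * (σ g)⁻¹ = ι (m g * φ g n * (m g)⁻¹) := by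
    intro g n
    by_cases hg : g = 1
    · subst hg
      simp [hm, hσ1, hφ1]
    · have h1 : m g = m₀ (f (key g)) := by simp [hm, if_neg hg]
      have h2 := hfkey g
      have hc : (fun n : N => σ (f (key g)) * ι n * (σ (f (key g)))⁻¹)
          = fun n : N => σ g * ι n * (σ g)⁻¹ := congrArg Prod.fst h2
      have hp : φ (f (key g)) = φ g := congrArg Prod.snd h2
      calc σ g * ι n * (σ g)⁻¹
          = σ (f (key g)) * ι n * (σ (f (key g)))⁻¹ := (congrFun hc n).symm
        _ = ι (m₀ (f (key g)) * φ (f (key g)) n * (m₀ (f (key g)))⁻¹) := hm₀spec _ n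
        _ = ι (m g * φ g n * (m g)⁻¹) := by rw [h1, hp]
  -- define σ'
  refine ⟨fun g => ι (m g)⁻¹ * σ g, ?_, ?_, ?_, ?_⟩
  · intro g
    have : π (ι (m g)) = 1 := (hexact _).mpr ⟨m g, rfl⟩
    simp [map_mul, map_inv, this, hσ g]
  · simp [hm1, hσ1]
  · -- finiteness of the defect
    have hconj : ∀ g h : G, σ g * ι ((m h)⁻¹) = ι (m g * φ g (m h)⁻¹ * (m g)⁻¹) * σ g := by
      intro g h
      have := hmspec g ((m h)⁻¹)
      calc σ g * ι ((m h)⁻¹)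
          = σ g * ι ((m h)⁻¹) * (σ g)⁻¹ * σ g := by group
        _ = ι (m g * φ g (m h)⁻¹ * (m g)⁻¹) * σ g := by rw [this]
    have hdecomp : ∀ g h : G,
        (ι (m g)⁻¹ * σ g) * (ι (m h)⁻¹ * σ h) * ((ι (m (g * h))⁻¹ * σ (g * h)))⁻¹
        = ι ((φ g (m h))⁻¹) * ι ((m g)⁻¹) * (σ g * σ h * (σ (g * h))⁻¹) * ι (m (g * h)) := by
      intro g h
      have h2 := hconj g h
      have h3 : (ι ((m (g * h))⁻¹))⁻¹ = ι (m (g * h)) := by rw [map_inv, inv_inv]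
      calc (ι (m g)⁻¹ * σ g) * (ι (m h)⁻¹ * σ h) * ((ι (m (g * h))⁻¹ * σ (g * h)))⁻¹
          = ι ((m g)⁻¹) * (σ g * ι ((m h)⁻¹)) * σ h * (σ (g * h))⁻¹ * (ι ((m (g * h))⁻¹))⁻¹ := by
            group
        _ = ι ((m g)⁻¹) * (ι (m g * φ g (m h)⁻¹ * (m g)⁻¹) * σ g) * σ h * (σ (g * h))⁻¹ *
              ι (m (g * h)) := by rw [h2, h3]
        _ = ι ((φ g (m h))⁻¹) * ι ((m g)⁻¹) * (σ g * σ h * (σ (g * h))⁻¹) * ι (m (g * h)) := by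
            simp only [map_mul, map_inv]
            group
    set A : Set E := ι '' ((fun p : MulAut N × N => (p.1 p.2)⁻¹) '' (Set.range φ ×ˢ Set.range m))
    set B : Set E := ι '' (Inv.inv '' Set.range m)
    set C : Set E := {x : E | ∃ g h : G, x = σ g * σ h * (σ (g * h))⁻¹}
    set Ds : Set E := ι '' Set.range m
    have hA : A.Finite := (((hφfin.prod hmfin).image _).image _)
    have hB : B.Finite := ((hmfin.image _).image _)
    have hD : Ds.Finite := hmfin.image _
    have hfin : (Set.image2 (· * ·) (Set.image2 (· * ·) (Set.image2 (· * ·) A B) C) Ds).Finite :=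
      Set.Finite.image2 _ (Set.Finite.image2 _ (Set.Finite.image2 _ hA hB) hσqhm) hD
    refine hfin.subset ?_
    rintro x ⟨g, h, rfl⟩
    rw [hdecomp g h]
    refine Set.mem_image2_of_mem (Set.mem_image2_of_mem (Set.mem_image2_of_mem ?_ ?_)
      ⟨g, h, rfl⟩) ?_
    · exact ⟨(φ g (m h))⁻¹, ⟨(φ g, m h), ⟨⟨g, rfl⟩, ⟨h, rfl⟩⟩, rfl⟩, rfl⟩
    · exact ⟨(m g)⁻¹, ⟨m g, ⟨g, rfl⟩, rfl⟩, rfl⟩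
    · exact ⟨m (g * h), ⟨g * h, rfl⟩, rfl⟩
  · -- induced conjugation is exactly φ
    intro g n
    have := hmspec g n
    calc (ι (m g)⁻¹ * σ g) * ι n * ((ι (m g)⁻¹ * σ g))⁻¹
        = ι ((m g)⁻¹) * (σ g * ι n * (σ g)⁻¹) * (ι ((m g)⁻¹))⁻¹ := by group
      _ = ι ((m g)⁻¹) * ι (m g * φ g n * (m g)⁻¹) * (ι ((m g)⁻¹))⁻¹ := by rw [this]
      _ = ι (φ g n) := by simp only [map_mul, map_inv, inv_inv]; group
end

section
/- Let (e, φ) be a non-abelian cocycle with respect to (G, N, ψ) such that both e : G × G → N and φ : G → Aut(N) have finite image. Then the extension 1 → N → E(e,φ) → G → 1 is bounded: the section σ(g) = (1,g) is a quasihomomorphism and the induced map G → Aut(N) has finite image. -/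
/-! The defect of the section `σ g = (1, g)` is the cocycle itself: in `E(e, φ)` one has
`σ g * σ h = (e g h, 1) * σ (g * h)`, so the defect set lies in `range e × {1}`.
Conjugation by `σ g` acts on `N` as `φ g`, whose image is finite by assumption. -/

section CrossedProduct

variable {G N : Type*} [Group G] [Group N] (φ : G → MulAut N) (e : G → G → N)
  (m : N × G → N × G → N × G)

theorem section_defect_subset_range_prod_one
    (he1 : ∀ g : G, e 1 g = 1 ∧ e g 1 = 1)
    (hm : ∀ p q : N × G, m p q = (p.1 * φ p.2 q.1 * e p.2 q.2, p.2 * q.2)) :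
    {p : N × G | ∃ g h : G, m (1, g) (1, h) = m p (1, g * h)} ⊆
      Set.range (fun p : G × G => e p.1 p.2) ×ˢ {1} := by
  rintro ⟨n, x⟩ ⟨g, h, hp⟩
  simp only [hm, map_one, mul_one, one_mul, Prod.mk.injEq] at hp
  obtain ⟨hn, hx⟩ := hp
  obtain rfl : x = 1 := right_eq_mul.mp hx
  rw [(he1 (g * h)).1, mul_one] at hn
  exact ⟨⟨(g, h), hn⟩, rfl⟩

theorem section_mul_conj (hφ1 : φ 1 = 1) (he1 : ∀ g : G, e 1 g = 1 ∧ e g 1 = 1)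
    (hm : ∀ p q : N × G, m p q = (p.1 * φ p.2 q.1 * e p.2 q.2, p.2 * q.2)) (g : G) (n : N) :
    m (1, g) (n, 1) = m (φ g n, 1) (1, g) := by
  simp [hm, hφ1, (he1 g).1, (he1 g).2]

end CrossedProduct

theorem Set.Finite.range_coe_mulAut {G N : Type*} [Group N] {φ : G → MulAut N}
    (hφ : (Set.range φ).Finite) : (Set.range fun g => ⇑(φ g)).Finite := by
  simpa only [← Set.range_comp'] using hφ.image (⇑)

theorem stmt16_general {G N : Type*} [Group G] [Group N]
    (φ : G → MulAut N) (e : G → G → N)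
    (hφ1 : φ 1 = 1) (he1 : ∀ g : G, e 1 g = 1 ∧ e g 1 = 1)
    (hefin : Set.Finite (Set.range (fun p : G × G => e p.1 p.2)))
    (hφfin : Set.Finite (Set.range φ))
    (m : N × G → N × G → N × G)
    (hm : ∀ p q : N × G, m p q = (p.1 * φ p.2 q.1 * e p.2 q.2, p.2 * q.2)) :
    -- σ : g ↦ (1,g) is a section of the projection
    (∀ g : G, (((1 : N), g) : N × G).2 = g) ∧
    -- σ is a quasihomomorphism: its defect set is finite
    Set.Finite {p : N × G | ∃ g h : G,
      m ((1 : N), g) ((1 : N), h) = m p ((1 : N), g * h)} ∧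
    -- conjugation by σ(g) induces φ(g) on N, and this map has finite image
    (∀ (g : G) (n : N), m ((1 : N), g) (n, 1) = m (φ g n, 1) ((1 : N), g)) ∧
    Set.Finite (Set.range (fun g : G => fun n : N => φ g n)) :=
  ⟨fun _ => rfl,
    (hefin.prod (Set.finite_singleton 1)).subset
      (section_defect_subset_range_prod_one φ e m he1 hm),
    section_mul_conj φ e m hφ1 he1 hm,
    hφfin.range_coe_mulAut⟩

/-- If (e,φ) is a non-abelian cocycle with respect to (G,N,ψ) and both e and φ
have finite image, then the extension 1 → N → E(e,φ) → G → 1 is bounded: the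
section σ(g) = (1,g) is a quasihomomorphism (its defect set, described via the
multiplication m of E(e,φ), is finite) and the map to Aut(N) it induces by
conjugation, namely φ, has finite image. -/
theorem stmt16 {G N : Type*} [Group G] [Group N]
    (φ : G → MulAut N) (e : G → G → N)
    (hψ : ∀ g h : G, ∃ m : N, ∀ n : N, φ (g * h) n = m * φ g (φ h n) * m⁻¹)
    (hφ1 : φ 1 = 1) (he1 : ∀ g : G, e 1 g = 1 ∧ e g 1 = 1)
    (hconj : ∀ g h : G, ∀ n : N, e g h * n * (e g h)⁻¹ = φ g (φ h ((φ (g * h))⁻¹ n)))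
    (hcoc : ∀ g h i : G, φ g (e h i) * e g (h * i) = e g h * e (g * h) i)
    (hefin : Set.Finite (Set.range (fun p : G × G => e p.1 p.2)))
    (hφfin : Set.Finite (Set.range φ))
    (m : N × G → N × G → N × G)
    (hm : ∀ p q : N × G, m p q = (p.1 * φ p.2 q.1 * e p.2 q.2, p.2 * q.2)) :
    -- σ : g ↦ (1,g) is a section of the projection
    (∀ g : G, (((1 : N), g) : N × G).2 = g) ∧
    -- σ is a quasihomomorphism: its defect set is finite
    Set.Finite {p : N × G | ∃ g h : G,
      m ((1 : N), g) ((1 : N), h) = m p ((1 : N), g * h)} ∧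
    -- conjugation by σ(g) induces φ(g) on N, and this map has finite image
    (∀ (g : G) (n : N), m ((1 : N), g) (n, 1) = m (φ g n, 1) ((1 : N), g)) ∧
    Set.Finite (Set.range (fun g : G => fun n : N => φ g n)) :=
  stmt16_general φ e hφ1 he1 hefin hφfin m hm
end

section
/- Let H = Heis be the integer Heisenberg group, realized as pairs [c,z] with c ∈ ℤ, z ∈ ℤ², and multiplication [c₁,z₁][c₂,z₂] = [c₁+c₂+ω(z₁,z₂), z₁+z₂], where ω is the determinant form on ℤ². Let φ : ℤ² → Aut(Heis) be given by φ(g)([c,z]) = [c + 2ω(g,z), z], and form the semidirect product Heis ⋊_φ ℤ². Then the centre of Heis ⋊_φ ℤ² is {([c,0],0) | c ∈ ℤ}, and hence is isomorphic to ℤ; in particular Heis ⋊_φ ℤ² is not isomorphic to Heis × ℤ² (whose centre is isomorphic to ℤ³). -/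
/-- The symplectic (determinant) form on ℤ². -/
def sform (x y : ℤ × ℤ) : ℤ := x.1 * y.2 - x.2 * y.1

/-- The integer Heisenberg group: pairs [c,z] with c ∈ ℤ, z ∈ ℤ², and
multiplication [c₁,z₁][c₂,z₂] = [c₁+c₂+ω(z₁,z₂), z₁+z₂]. -/
@[ext] structure Heis where
  c : ℤ
  z : ℤ × ℤ

instance : Mul Heis := ⟨fun p q => ⟨p.c + q.c + sform p.z q.z, p.z + q.z⟩⟩
instance : One Heis := ⟨⟨0, 0⟩⟩
instance : Inv Heis := ⟨fun p => ⟨-p.c, -p.z⟩⟩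

theorem Heis.mul_def (p q : Heis) :
    p * q = ⟨p.c + q.c + sform p.z q.z, p.z + q.z⟩ := rfl
theorem Heis.one_def : (1 : Heis) = ⟨0, 0⟩ := rfl
theorem Heis.inv_def (p : Heis) : p⁻¹ = ⟨-p.c, -p.z⟩ := rfl

instance : Group Heis where
  mul_assoc p q r := by
    ext <;> simp [Heis.mul_def, sform, Prod.ext_iff] <;> ring
  one_mul p := by
    ext <;> simp [Heis.mul_def, Heis.one_def, sform]
  mul_one p := by
    ext <;> simp [Heis.mul_def, Heis.one_def, sform]
  inv_mul_cancel p := by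
    ext <;> simp [Heis.mul_def, Heis.one_def, Heis.inv_def, sform] <;> ring

/-- The action φ(g)([c,z]) = [c + 2ω(g,z), z] of ℤ² on Heis by (inner) automorphisms. -/
def heisPhi (g : ℤ × ℤ) (p : Heis) : Heis := ⟨p.c + 2 * sform g p.z, p.z⟩

/-- The semidirect product Heis ⋊_φ ℤ². -/
@[ext] structure SD where
  n : Heis
  g : ℤ × ℤ

instance : Mul SD := ⟨fun p q => ⟨p.n * heisPhi p.g q.n, p.g + q.g⟩⟩
instance : One SD := ⟨⟨1, 0⟩⟩
instance : Inv SD := ⟨fun p => ⟨heisPhi (-p.g) p.n⁻¹, -p.g⟩⟩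

theorem SD.mul_def (p q : SD) : p * q = ⟨p.n * heisPhi p.g q.n, p.g + q.g⟩ := rfl
theorem SD.one_def : (1 : SD) = ⟨1, 0⟩ := rfl
theorem SD.inv_def (p : SD) : p⁻¹ = ⟨heisPhi (-p.g) p.n⁻¹, -p.g⟩ := rfl

instance : Group SD where
  mul_assoc p q r := by
    ext <;>
      simp [SD.mul_def, Heis.mul_def, heisPhi, sform, Prod.ext_iff] <;> ring
  one_mul p := by
    ext <;> simp [SD.mul_def, SD.one_def, Heis.mul_def, Heis.one_def, heisPhi, sform]
  mul_one p := by
    ext <;> simp [SD.mul_def, SD.one_def, Heis.mul_def, Heis.one_def, heisPhi, sform]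
  inv_mul_cancel p := by
    ext <;>
      simp [SD.mul_def, SD.one_def, SD.inv_def, Heis.mul_def, Heis.one_def,
        Heis.inv_def, heisPhi, sform, Prod.ext_iff] <;> ring

/-!
Multiplying out, `p` and `q` commute in `Heis ⋊_φ ℤ²` exactly when
`ω(p.g + p.z, q.z) = ω(q.g, p.z)`. Testing against `(1, h)` forces `ω(h, p.z) = 0` for all `h`,
and then testing against `([0, w], 0)` forces `ω(p.g, w) = 0` for all `w`; as `ω` is
nondegenerate, `p.z = 0` and `p.g = 0`. So the centre is the copy `{([c,0],0)}` of `ℤ`, whereas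
the centre of `Heis × ℤ²` is `{[c,0]} × ℤ² ≅ ℤ³`. An isomorphism of the groups would restrict to
one of the centres, hence to a `ℤ`-linear isomorphism `ℤ ≃ ℤ³`, which is ruled out by rank.
-/

theorem sform_swap (x y : ℤ × ℤ) : sform y x = -sform x y := by
  simp only [sform]; ring

theorem sform_add_left (x y w : ℤ × ℤ) : sform (x + y) w = sform x w + sform y w := by
  simp only [sform, Prod.fst_add, Prod.snd_add]; ring

theorem eq_zero_of_forall_sform_eq_zero {v : ℤ × ℤ} (h : ∀ w, sform v w = 0) : v = 0 := by
  have h₁ := h (1, 0)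
  have h₂ := h (0, 1)
  simp only [sform, mul_zero, mul_one, zero_sub, sub_zero, neg_eq_zero] at h₁ h₂
  exact Prod.ext h₂ h₁

namespace Heis

theorem commute_iff (p q : Heis) : Commute p q ↔ sform p.z q.z = 0 := by
  rw [Commute, SemiconjBy, mul_def, mul_def, Heis.mk.injEq, sform_swap p.z q.z, add_comm q.z]
  simp only [and_true]
  omega

theorem mem_center_iff (p : Heis) : p ∈ Subgroup.center Heis ↔ p.z = 0 := by
  rw [Subgroup.mem_center_iff]
  refine ⟨fun h => eq_zero_of_forall_sform_eq_zero fun w => ?_, fun hz q => ?_⟩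
  · exact (commute_iff p ⟨0, w⟩).1 (h ⟨0, w⟩).symm
  · exact ((commute_iff p q).2 (by simp [hz, sform])).symm

def ofCenter : Multiplicative ℤ →* Heis where
  toFun c := ⟨c.toAdd, 0⟩
  map_one' := rfl
  map_mul' a b := by ext <;> simp [mul_def, sform]

theorem ofCenter_injective : Function.Injective ofCenter :=
  fun _ _ h => congrArg Heis.c h

theorem range_ofCenter : ofCenter.range = Subgroup.center Heis := by
  ext p
  rw [mem_center_iff, MonoidHom.mem_range]
  refine ⟨fun ⟨c, hc⟩ => hc ▸ rfl, fun hz => ⟨Multiplicative.ofAdd p.c, ?_⟩⟩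
  ext <;> simp [ofCenter, hz]

noncomputable def centerEquiv : Subgroup.center Heis ≃* Multiplicative ℤ :=
  (MulEquiv.subgroupCongr range_ofCenter.symm).trans
    (MonoidHom.ofInjective ofCenter_injective).symm

end Heis

namespace SD

theorem commute_iff (p q : SD) :
    Commute p q ↔ sform (p.g + p.n.z) q.n.z = sform q.g p.n.z := by
  rw [Commute, SemiconjBy, mul_def, mul_def, SD.mk.injEq, Heis.mul_def, Heis.mul_def,
    Heis.mk.injEq]
  simp only [heisPhi, sform_add_left, sform_swap q.n.z p.n.z, add_comm q.n.z, add_comm q.g,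
    and_true]
  omega

theorem mem_center_iff (p : SD) : p ∈ Subgroup.center SD ↔ p.n.z = 0 ∧ p.g = 0 := by
  rw [Subgroup.mem_center_iff]
  constructor
  · intro h
    have hz : p.n.z = 0 := eq_zero_of_forall_sform_eq_zero fun w => by
      have := (commute_iff p ⟨1, w⟩).1 (h ⟨1, w⟩).symm
      rw [← neg_eq_zero, ← sform_swap]
      simpa [Heis.one_def, sform] using this.symm
    have hg : p.g = 0 := eq_zero_of_forall_sform_eq_zero fun w => by
      simpa [hz, sform] using (commute_iff p ⟨⟨0, w⟩, 0⟩).1 (h ⟨⟨0, w⟩, 0⟩).symm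
    exact ⟨hz, hg⟩
  · rintro ⟨hz, hg⟩ q
    exact ((commute_iff p q).2 (by simp [hz, hg, sform])).symm

def ofCenter : Multiplicative ℤ →* SD where
  toFun c := ⟨⟨c.toAdd, 0⟩, 0⟩
  map_one' := rfl
  map_mul' a b := by ext <;> simp [mul_def, Heis.mul_def, heisPhi, sform]

theorem ofCenter_injective : Function.Injective ofCenter :=
  fun _ _ h => congrArg (fun p : SD => p.n.c) h

theorem range_ofCenter : ofCenter.range = Subgroup.center SD := by
  ext p
  rw [mem_center_iff, MonoidHom.mem_range]
  refine ⟨fun ⟨c, hc⟩ => hc ▸ ⟨rfl, rfl⟩, fun ⟨hz, hg⟩ => ⟨Multiplicative.ofAdd p.n.c, ?_⟩⟩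
  ext <;> simp [ofCenter, hz, hg]

noncomputable def centerEquiv : Subgroup.center SD ≃* Multiplicative ℤ :=
  (MulEquiv.subgroupCongr range_ofCenter.symm).trans
    (MonoidHom.ofInjective ofCenter_injective).symm

end SD

noncomputable def centerProdEquiv :
    Subgroup.center (Heis × Multiplicative (ℤ × ℤ)) ≃* Multiplicative (ℤ × ℤ × ℤ) :=
  (MulEquiv.subgroupCongr (by rw [Subgroup.center_prod, CommGroup.center_eq_top])).trans <|
    (Subgroup.prodEquiv _ _).trans <|
      (Heis.centerEquiv.prodCongr Subgroup.topEquiv).trans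
        (MulEquiv.prodMultiplicative ℤ (ℤ × ℤ)).symm

theorem isEmpty_mulEquiv_int_int3 : IsEmpty (Multiplicative ℤ ≃* Multiplicative (ℤ × ℤ × ℤ)) := by
  refine ⟨fun e => ?_⟩
  have h : Module.finrank ℤ ℤ = Module.finrank ℤ (ℤ × ℤ × ℤ) :=
    (MulEquiv.toAdditive e : ℤ ≃+ ℤ × ℤ × ℤ).toIntLinearEquiv.finrank_eq
  simp [Module.finrank_prod] at h

/-- The centre of Heis ⋊_φ ℤ² consists exactly of the elements ([c,0],0), is
isomorphic to ℤ, while the centre of Heis × ℤ² is isomorphic to ℤ³; in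
particular Heis ⋊_φ ℤ² is not isomorphic to Heis × ℤ². -/
theorem stmt17 :
    (∀ p : SD, p ∈ Subgroup.center SD ↔ ∃ c : ℤ, p = ⟨⟨c, 0⟩, 0⟩) ∧
    Nonempty ((Subgroup.center SD) ≃* Multiplicative ℤ) ∧
    Nonempty ((Subgroup.center (Heis × Multiplicative (ℤ × ℤ)))
      ≃* Multiplicative (ℤ × ℤ × ℤ)) ∧
    IsEmpty (SD ≃* Heis × Multiplicative (ℤ × ℤ)) := by
  refine ⟨fun p => ?_, ⟨SD.centerEquiv⟩, ⟨centerProdEquiv⟩, ⟨fun e => ?_⟩⟩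
  · rw [← SD.range_ofCenter, MonoidHom.mem_range]
    exact ⟨fun ⟨c, hc⟩ => ⟨c.toAdd, hc.symm⟩, fun ⟨c, hc⟩ => ⟨.ofAdd c, hc.symm⟩⟩
  · exact isEmpty_mulEquiv_int_int3.false
      (SD.centerEquiv.symm.trans ((Subgroup.centerCongr e).trans centerProdEquiv))
end
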